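/- For every parity game there is a unique partition (W_even, W_odd) of the vertex set such that player even has a winning strategy from every vertex in W_even and player odd has a winning strategy from every vertex in W_odd; moreover, if a player has a winning strategy from a vertex, then that player has a memoryless winning strategy from that vertex. -/
import Mathlib


universe u

/-- A parity game: a directed graph with a total edge relation, a priority
function and an owner function (`true` = player even, `false` = player odd). -/
structure ParityGame (V : Type u) where
  edge : V → V → Prop
  total : ∀ v, ∃ w, edge v w
  prio : V → ℕ
  owner : V → Bool

namespace ParityGame

variable {V : Type u}

/-- A (history-dependent) strategy: given the history of previously visited
vertices and the current vertex, choose a successor.  Only the values at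
vertices owned by the given player matter. -/
abbrev Strategy (V : Type u) : Type u := List V → V → V

variable (G : ParityGame V)

/-- A strategy is valid for player `i` if it always proposes edges. -/
def ValidStrategy (i : Bool) (σ : Strategy V) : Prop :=
  ∀ h v, G.owner v = i → G.edge v (σ h v)

/-- A memoryless strategy only depends on the current vertex. -/
def Memoryless (σ : Strategy V) : Prop := ∀ h h' v, σ h v = σ h' v

/-- An (infinite) play is an infinite path in the game graph. -/
def IsPlay (p : ℕ → V) : Prop := ∀ n, G.edge (p n) (p (n + 1))

/-- The history of a play before position `n`. -/
def hist (p : ℕ → V) (n : ℕ) : List V := List.ofFn (fun k : Fin n => p k)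

/-- A play is consistent with a strategy `σ` of player `i` if at every vertex
owned by `i` the play follows `σ`. -/
def Consistent (i : Bool) (σ : Strategy V) (p : ℕ → V) : Prop :=
  ∀ n, G.owner (p n) = i → p (n + 1) = σ (hist p n) (p n)

/-- `G.ForcesVia i σ v U T`: every play from `v` consistent with `σ` reaches
`T`, all earlier vertices lying in `U`. -/
def ForcesVia (i : Bool) (σ : Strategy V) (v : V) (U T : Set V) : Prop :=
  ∀ p : ℕ → V, G.IsPlay p → G.Consistent i σ p → p 0 = v →
    ∃ n, p n ∈ T ∧ ∀ j < n, p j ∈ U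

/-- `v ⇒_{i,U} T`: player `i` has a memoryless strategy forcing every
consistent play from `v` to reach `T` while staying in `U` beforehand. -/
def Forces (i : Bool) (v : V) (U T : Set V) : Prop :=
  ∃ σ : Strategy V, G.ValidStrategy i σ ∧ Memoryless σ ∧ G.ForcesVia i σ v U T

/-- Every play from `v` consistent with `σ` stays in `U` forever. -/
def DivergesVia (i : Bool) (σ : Strategy V) (v : V) (U : Set V) : Prop :=
  ∀ p : ℕ → V, G.IsPlay p → G.Consistent i σ p → p 0 = v → ∀ n, p n ∈ U

/-- `v ⇒^ω_{i,U}`: player `i` has a memoryless strategy keeping all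
consistent plays from `v` forever inside `U`. -/
def Diverges (i : Bool) (v : V) (U : Set V) : Prop :=
  ∃ σ : Strategy V, G.ValidStrategy i σ ∧ Memoryless σ ∧ G.DivergesVia i σ v U

/-- Priority `k` occurs infinitely often on the play `p`. -/
def InfOften (p : ℕ → V) (k : ℕ) : Prop := ∀ N, ∃ n, N ≤ n ∧ G.prio (p n) = k

/-- Player even wins a play iff the least priority occurring infinitely often
is even. -/
def EvenWinsPlay (p : ℕ → V) : Prop := Even (sInf {k | G.InfOften p k})

/-- Player `i` wins the play `p`. -/
def WinsPlay (i : Bool) (p : ℕ → V) : Prop := G.EvenWinsPlay p ↔ i = true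

/-- `σ` is a winning strategy for player `i` from `v`. -/
def WinningFrom (i : Bool) (σ : Strategy V) (v : V) : Prop :=
  ∀ p : ℕ → V, G.IsPlay p → G.Consistent i σ p → p 0 = v → G.WinsPlay i p

set_option linter.unusedSectionVars false

section Aux
open Classical
variable (G : ParityGame V)

noncomputable def anySucc (v : V) : V := (G.total v).choose

lemma anySucc_edge (v : V) : G.edge v (G.anySucc v) := (G.total v).choose_spec

/-- Shift of a play. -/
lemma isPlay_shift {p : ℕ → V} (hp : G.IsPlay p) (m : ℕ) :
    G.IsPlay (fun k => p (m + k)) := by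
  intro n; have := hp (m + n); simpa [Nat.add_assoc] using this

lemma consistent_shift {i : Bool} {σ : Strategy V} (hσ : Memoryless σ)
    {p : ℕ → V} (hp : G.Consistent i σ p) (m : ℕ) :
    G.Consistent i σ (fun k => p (m + k)) := by
  intro n hn
  have h1 := hp (m + n) hn
  rw [hσ (hist p (m+n)) (hist (fun k => p (m+k)) n) (p (m+n))] at h1
  simpa [Nat.add_assoc] using h1

lemma infOften_shift {p : ℕ → V} (m : ℕ) :
    {k | G.InfOften (fun j => p (m + j)) k} = {k | G.InfOften p k} := by
  ext k; constructor
  · intro h N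
    obtain ⟨n, hn, he⟩ := h N
    exact ⟨m + n, le_trans hn (Nat.le_add_left _ _), he⟩
  · intro h N
    obtain ⟨n, hn, he⟩ := h (m + N)
    refine ⟨n - m, by omega, ?_⟩
    show G.prio (p (m + (n - m))) = k
    rw [show m + (n - m) = n by omega]; exact he

lemma winsPlay_shift {i : Bool} {p : ℕ → V} (m : ℕ)
    (h : G.WinsPlay i (fun k => p (m + k))) : G.WinsPlay i p := by
  unfold WinsPlay EvenWinsPlay at *
  rwa [infOften_shift] at h

lemma winsPlay_not_both {i : Bool} {p : ℕ → V}
    (h1 : G.WinsPlay i p) (h2 : G.WinsPlay (!i) p) : False := by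
  unfold WinsPlay at *
  cases i <;> simp_all

lemma hist_succ (p : ℕ → V) (n : ℕ) :
    hist p (n + 1) = hist p n ++ [p n] := by
  unfold hist
  rw [List.ofFn_succ']
  simp [Fin.castSucc]

end Aux

section Follow
open Classical
variable (G : ParityGame V)

/-- The play obtained by letting each player follow their own strategy. -/
noncomputable def follow (σ : Bool → Strategy V) (v : V) : ℕ → V
  | 0 => v
  | n + 1 => σ (G.owner (follow σ v n)) [] (follow σ v n)

lemma follow_succ (σ : Bool → Strategy V) (v : V) (n : ℕ) :
    G.follow σ v (n + 1) = σ (G.owner (G.follow σ v n)) [] (G.follow σ v n) := rfl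

variable {σ : Bool → Strategy V} {v : V}

lemma isPlay_follow (hval : ∀ i, G.ValidStrategy i (σ i)) :
    G.IsPlay (G.follow σ v) := by
  intro n
  rw [G.follow_succ]
  exact hval (G.owner (G.follow σ v n)) [] _ rfl

lemma consistent_follow (i : Bool) (hmem : Memoryless (σ i)) :
    G.Consistent i (σ i) (G.follow σ v) := by
  intro n hn
  rw [G.follow_succ, hn]
  exact hmem [] _ _

lemma not_both_winningFrom {σt σf : Strategy V}
    (hvt : G.ValidStrategy true σt) (hmt : Memoryless σt)
    (hvf : G.ValidStrategy false σf) (hmf : Memoryless σf)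
    (hwt : G.WinningFrom true σt v) (hwf : G.WinningFrom false σf v) : False := by
  set σ : Bool → Strategy V := fun i => if i then σt else σf with hσ
  have hval : ∀ i, G.ValidStrategy i (σ i) := by
    intro i; cases i <;> simpa [hσ]
  have hp := G.isPlay_follow (σ := σ) (v := v) hval
  have h1 : G.WinsPlay true (G.follow σ v) :=
    hwt _ hp (G.consistent_follow true (by simpa [hσ] using hmt)) rfl
  have h2 : G.WinsPlay false (G.follow σ v) :=
    hwf _ hp (G.consistent_follow false (by simpa [hσ] using hmf)) rfl
  exact G.winsPlay_not_both (i := true) h1 (by simpa using h2)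

/-- Splice: keep `p` up to time `n`, then let both players follow `σ`. -/
noncomputable def splice (p : ℕ → V) (n : ℕ) (σ : Bool → Strategy V) : ℕ → V :=
  fun k => if k < n then p k else G.follow σ (p n) (k - n)

lemma splice_eq_left {p : ℕ → V} {n k : ℕ} (h : k ≤ n) :
    G.splice p n σ k = p k := by
  unfold splice
  rcases lt_or_eq_of_le h with h | h
  · simp [h]
  · subst h; simp [follow]

lemma splice_tail (p : ℕ → V) (n : ℕ) :
    (fun k => G.splice p n σ (n + k)) = G.follow σ (p n) := by
  funext k
  unfold splice
  simp

lemma isPlay_splice {p : ℕ → V} (n : ℕ)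
    (hp : ∀ k, k + 1 ≤ n → G.edge (p k) (p (k + 1)))
    (hval : ∀ i, G.ValidStrategy i (σ i)) : G.IsPlay (G.splice p n σ) := by
  intro k
  rcases lt_or_ge (k + 1) n with h | h
  · rw [G.splice_eq_left (by omega), G.splice_eq_left (le_of_lt h)]; exact hp k (by omega)
  · rcases lt_or_ge k n with h2 | h2
    · have hk : k + 1 = n := by omega
      rw [G.splice_eq_left (le_of_lt h2), G.splice_eq_left (le_of_eq hk)]
      exact hp k (by omega)
    · have e1 : G.splice p n σ k = G.follow σ (p n) (k - n) := by
        unfold splice; simp [Nat.not_lt.mpr h2]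
      have e2 : G.splice p n σ (k + 1) = G.follow σ (p n) (k - n + 1) := by
        unfold splice
        have : ¬ (k + 1 < n) := by omega
        simp only [this, if_false]
        congr 1; omega
      rw [e1, e2]
      exact G.isPlay_follow hval (k - n)

lemma consistent_splice {p : ℕ → V} {i : Bool} (n : ℕ)
    (hmem : Memoryless (σ i))
    (hc : ∀ k, k + 1 ≤ n → G.owner (p k) = i → p (k + 1) = σ i (hist p k) (p k)) :
    G.Consistent i (σ i) (G.splice p n σ) := by
  intro k hk
  rcases lt_or_ge k n with h | h
  · rw [G.splice_eq_left (le_of_lt h)] at hk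
    rw [G.splice_eq_left (by omega : k + 1 ≤ n), G.splice_eq_left (le_of_lt h),
      hc k (by omega) hk]
    exact hmem _ _ _
  · have e1 : G.splice p n σ k = G.follow σ (p n) (k - n) := by
      unfold splice; simp [Nat.not_lt.mpr h]
    have e2 : G.splice p n σ (k + 1) = G.follow σ (p n) (k - n + 1) := by
      unfold splice
      have : ¬ (k + 1 < n) := by omega
      simp only [this, if_false]
      congr 1; omega
    rw [e1] at hk
    rw [e1, e2, G.follow_succ, hk]
    exact hmem _ _ _

/-- The trap lemma: a play consistent with the (uniform, memoryless) winning
strategy of player `j`, starting in `j`'s winning region, stays there. -/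
lemma stay_in_region (W : Bool → Set V) (σ : Bool → Strategy V)
    (hcov : ∀ u, u ∈ W true ∨ u ∈ W false)
    (hval : ∀ i, G.ValidStrategy i (σ i)) (hmem : ∀ i, Memoryless (σ i))
    (hwin : ∀ i, ∀ u ∈ W i, G.WinningFrom i (σ i) u)
    {j : Bool} {p : ℕ → V} (hp : G.IsPlay p) (hc : G.Consistent j (σ j) p)
    (h0 : p 0 ∈ W j) : ∀ n, p n ∈ W j := by
  intro n
  by_contra hn
  have hn' : p n ∈ W (!j) := by
    rcases hcov (p n) with h | h <;> cases j <;> simp_all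
  have hn0 : n ≠ 0 := by rintro rfl; exact hn h0
  set r := G.splice p n σ with hr
  have hrp : G.IsPlay r := G.isPlay_splice n (fun k _ => hp k) hval
  have hrc : G.Consistent j (σ j) r := G.consistent_splice n (hmem j) (fun k _ hk => hc k hk)
  have hr0 : r 0 = p 0 := G.splice_eq_left (by omega)
  have hwr : G.WinsPlay j r := hwin j (p 0) h0 r hrp hrc hr0
  have htail : (fun k => r (n + k)) = G.follow σ (p n) := G.splice_tail p n
  have hwt : G.WinsPlay (!j) (fun k => r (n + k)) := by
    rw [htail]
    exact hwin (!j) (p n) hn' _ (G.isPlay_follow hval)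
      (G.consistent_follow (!j) (hmem (!j))) rfl
  exact G.winsPlay_not_both hwr (G.winsPlay_shift n hwt)

end Follow

section Attractor
open Classical
variable [Fintype V] (G : ParityGame V) (i : Bool) (T : Set V)

/-- One-step attractor operation. -/
def astep (S : Set V) : Set V :=
  S ∪ {v | (G.owner v = i ∧ ∃ w, G.edge v w ∧ w ∈ S) ∨
           (G.owner v ≠ i ∧ ∀ w, G.edge v w → w ∈ S)}

def iterA : ℕ → Set V
  | 0 => T
  | n + 1 => G.astep i (iterA n)

lemma iterA_succ (n : ℕ) : G.iterA i T (n + 1) = G.astep i (G.iterA i T n) := rfl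

/-- The `i`-attractor of `T`. -/
def attr : Set V := ⋃ n, G.iterA i T n

lemma subset_astep (S : Set V) : S ⊆ G.astep i S := Set.subset_union_left

lemma iterA_mono {m n : ℕ} (h : m ≤ n) : G.iterA i T m ⊆ G.iterA i T n := by
  induction n with
  | zero => simp_all
  | succ n ih =>
    rcases Nat.lt_or_ge m (n + 1) with h2 | h2
    · rw [G.iterA_succ]
      exact (ih (by omega)).trans (G.subset_astep i _)
    · have : m = n + 1 := by omega
      subst this; exact le_rfl

lemma iterA_subset_attr (n : ℕ) : G.iterA i T n ⊆ G.attr i T :=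
  Set.subset_iUnion (fun n => G.iterA i T n) n

lemma subset_attr : T ⊆ G.attr i T := G.iterA_subset_attr i T 0

lemma mem_attr_iff {v : V} : v ∈ G.attr i T ↔ ∃ n, v ∈ G.iterA i T n :=
  Set.mem_iUnion

/-- Attractor rank. -/
noncomputable def rankA (v : V) : ℕ :=
  if h : ∃ n, v ∈ G.iterA i T n then Nat.find h else 0

lemma rankA_spec {v : V} (h : v ∈ G.attr i T) : v ∈ G.iterA i T (G.rankA i T v) := by
  rw [mem_attr_iff] at h
  rw [rankA, dif_pos h]
  exact Nat.find_spec h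

lemma rankA_le_of_mem {v : V} {n : ℕ} (h : v ∈ G.iterA i T n) : G.rankA i T v ≤ n := by
  have h' : ∃ n, v ∈ G.iterA i T n := ⟨n, h⟩
  rw [rankA, dif_pos h']
  exact Nat.find_le h

lemma rankA_pos {v : V} (h : v ∈ G.attr i T) (hT : v ∉ T) : G.rankA i T v ≠ 0 := by
  intro h0
  have := G.rankA_spec i T h
  rw [h0] at this
  exact hT this

lemma attr_step {v : V} (h : v ∈ G.attr i T) (hT : v ∉ T) :
    (G.owner v = i ∧ ∃ w, G.edge v w ∧ w ∈ G.iterA i T (G.rankA i T v - 1)) ∨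
    (G.owner v ≠ i ∧ ∀ w, G.edge v w → w ∈ G.iterA i T (G.rankA i T v - 1)) := by
  have hpos := G.rankA_pos i T h hT
  have hs := G.rankA_spec i T h
  obtain ⟨r, hr⟩ : ∃ r, G.rankA i T v = r + 1 := ⟨G.rankA i T v - 1, by omega⟩
  rw [hr] at hs
  have hnot : v ∉ G.iterA i T r := by
    intro hc
    have := G.rankA_le_of_mem i T hc
    omega
  rw [G.iterA_succ] at hs
  have : v ∈ G.astep i (G.iterA i T r) := hs
  rcases this with h1 | h1
  · exact absurd h1 hnot
  · rw [hr]; simpa using h1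

/-- The attractor strategy step for player `i`. -/
noncomputable def attNext (v : V) : V :=
  if h : ∃ w, G.edge v w ∧ w ∈ G.iterA i T (G.rankA i T v - 1) then h.choose
  else G.anySucc v

lemma attNext_edge (v : V) : G.edge v (G.attNext i T v) := by
  rw [attNext]
  split
  · next h => exact h.choose_spec.1
  · exact G.anySucc_edge v

lemma attNext_spec {v : V} (h : v ∈ G.attr i T) (hT : v ∉ T) (ho : G.owner v = i) :
    G.attNext i T v ∈ G.iterA i T (G.rankA i T v - 1) := by
  rcases G.attr_step i T h hT with ⟨_, hw⟩ | ⟨ho', _⟩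
  · rw [attNext, dif_pos hw]
    exact hw.choose_spec.2
  · exact absurd ho ho'

lemma attr_closed_own {v w : V} (ho : G.owner v = i) (he : G.edge v w)
    (hw : w ∈ G.attr i T) : v ∈ G.attr i T := by
  obtain ⟨n, hn⟩ := (G.mem_attr_iff i T).1 hw
  refine G.iterA_subset_attr i T (n + 1) ?_
  rw [G.iterA_succ]
  exact Or.inr (Or.inl ⟨ho, w, he, hn⟩)

lemma attr_closed_opp {v : V} (ho : G.owner v ≠ i)
    (hw : ∀ w, G.edge v w → w ∈ G.attr i T) : v ∈ G.attr i T := by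
  set b := Finset.univ.sup (G.rankA i T) with hb
  have hall : ∀ w, G.edge v w → w ∈ G.iterA i T b := by
    intro w hwe
    exact G.iterA_mono i T (hb ▸ Finset.le_sup (Finset.mem_univ w))
      (G.rankA_spec i T (hw w hwe))
  refine G.iterA_subset_attr i T (b + 1) ?_
  rw [G.iterA_succ]
  exact Or.inr (Or.inr ⟨ho, hall⟩)

/-- The complement of an attractor is a subgame (total edge relation). -/
lemma compl_attr_total : ∀ v ∈ (G.attr i T)ᶜ, ∃ w ∈ (G.attr i T)ᶜ, G.edge v w := by
  intro v hv
  by_cases ho : G.owner v = i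
  · obtain ⟨w, hw⟩ := G.total v
    refine ⟨w, ?_, hw⟩
    intro hwa
    exact hv (G.attr_closed_own i T ho hw hwa)
  · by_contra hc
    push_neg at hc
    exact hv (G.attr_closed_opp i T ho (fun w hwe => by
      by_contra hwa; exact hc w hwa hwe))

/-- The attractor forcing lemma: any play consistent with a strategy that
agrees with the attractor strategy reaches `T` from any point of the
attractor, staying inside the attractor. -/
lemma attr_forces (τ : Strategy V)
    (hτ : ∀ h v, v ∈ G.attr i T → v ∉ T → G.owner v = i → τ h v = G.attNext i T v)
    {p : ℕ → V} (hp : G.IsPlay p) (hc : G.Consistent i τ p) :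
    ∀ m, p m ∈ G.attr i T →
      ∃ n, m ≤ n ∧ p n ∈ T ∧ ∀ j, m ≤ j → j < n → p j ∈ G.attr i T := by
  have key : ∀ r m, G.rankA i T (p m) ≤ r → p m ∈ G.attr i T →
      ∃ n, m ≤ n ∧ p n ∈ T ∧ ∀ j, m ≤ j → j < n → p j ∈ G.attr i T := by
    intro r
    induction r with
    | zero =>
      intro m hr hm
      refine ⟨m, le_rfl, ?_, by omega⟩
      have := G.rankA_spec i T hm
      rw [Nat.le_zero.mp hr] at this
      exact this
    | succ r ih =>
      intro m hr hm
      by_cases hT : p m ∈ T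
      · exact ⟨m, le_rfl, hT, by omega⟩
      · have hstep : p (m + 1) ∈ G.iterA i T (G.rankA i T (p m) - 1) := by
          by_cases ho : G.owner (p m) = i
          · rw [hc m ho, hτ _ _ hm hT ho]
            exact G.attNext_spec i T hm hT ho
          · rcases G.attr_step i T hm hT with ⟨ho', _⟩ | ⟨_, hall⟩
            · exact absurd ho' ho
            · exact hall _ (hp m)
        have hpos := G.rankA_pos i T hm hT
        have hmem : p (m + 1) ∈ G.attr i T := G.iterA_subset_attr i T _ hstep
        have hrk : G.rankA i T (p (m + 1)) ≤ r := by
          have := G.rankA_le_of_mem i T hstep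
          omega
        obtain ⟨n, hn1, hn2, hn3⟩ := ih (m + 1) hrk hmem
        refine ⟨n, by omega, hn2, ?_⟩
        intro j hj1 hj2
        rcases Nat.eq_or_lt_of_le hj1 with h | h
        · rw [← h]; exact hm
        · exact hn3 j (by omega) hj2
  intro m hm
  exact key (G.rankA i T (p m)) m le_rfl hm

end Attractor

section Subgame
open Classical
variable (G : ParityGame V)

/-- The subgame on a set `U` on which the edge relation is still total. -/
def subgame (U : Set V) (hU : ∀ v ∈ U, ∃ w ∈ U, G.edge v w) : ParityGame U where
  edge a b := G.edge a b
  total a := by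
    obtain ⟨w, hw, he⟩ := hU a a.2
    exact ⟨⟨w, hw⟩, he⟩
  prio a := G.prio a
  owner a := G.owner a

variable {U : Set V} {hU : ∀ v ∈ U, ∃ w ∈ U, G.edge v w}

lemma subgame_winsPlay {q : ℕ → U} {i : Bool} :
    (G.subgame U hU).WinsPlay i q ↔ G.WinsPlay i (fun n => (q n : V)) := Iff.rfl

/-- Transfer of winning from a subgame to the full game, along a play that
stays inside the subgame. -/
lemma subgame_winning_transfer {i : Bool} {σ' : Strategy U}
    (hm' : Memoryless σ') {τ : Strategy V}
    {p : ℕ → V} (hp : G.IsPlay p) (hc : G.Consistent i τ p)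
    (hstay : ∀ n, p n ∈ U)
    (hagree : ∀ n, G.owner (p n) = i →
      τ (hist p n) (p n) = (σ' [] ⟨p n, hstay n⟩ : V))
    {w : U} (hw : (G.subgame U hU).WinningFrom i σ' w) (h0 : p 0 = (w : V)) :
    G.WinsPlay i p := by
  set q : ℕ → U := fun n => ⟨p n, hstay n⟩ with hq
  have hqp : (G.subgame U hU).IsPlay q := fun n => hp n
  have hqc : (G.subgame U hU).Consistent i σ' q := by
    intro n hn
    have ho : G.owner (p n) = i := hn
    apply Subtype.ext
    show p (n + 1) = (σ' (hist q n) (q n) : V)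
    rw [hc n ho, hagree n ho, hm' [] (hist q n) (q n)]
  have hq0 : q 0 = w := Subtype.ext h0
  have := hw q hqp hqc hq0
  rwa [subgame_winsPlay] at this

end Subgame

section HFollow
variable (G : ParityGame V)

/-- History-aware play where each player follows their own (possibly
history-dependent) strategy. -/
noncomputable def hfollow (σ : Bool → Strategy V) (v : V) : ℕ → List V × V
  | 0 => ([], v)
  | n + 1 =>
    ((hfollow σ v n).1 ++ [(hfollow σ v n).2],
      σ (G.owner (hfollow σ v n).2) (hfollow σ v n).1 (hfollow σ v n).2)

noncomputable def hplay (σ : Bool → Strategy V) (v : V) : ℕ → V :=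
  fun n => (G.hfollow σ v n).2

variable {σ : Bool → Strategy V} {v : V}

lemma hfollow_fst (n : ℕ) : (G.hfollow σ v n).1 = hist (G.hplay σ v) n := by
  induction n with
  | zero => simp [hfollow, hist]
  | succ n ih =>
    show (G.hfollow σ v n).1 ++ [(G.hfollow σ v n).2] = _
    rw [ih, hist_succ]
    rfl

lemma hplay_zero : G.hplay σ v 0 = v := rfl

lemma hplay_succ (n : ℕ) :
    G.hplay σ v (n + 1) =
      σ (G.owner (G.hplay σ v n)) (hist (G.hplay σ v) n) (G.hplay σ v n) := by
  show σ (G.owner (G.hfollow σ v n).2) (G.hfollow σ v n).1 (G.hfollow σ v n).2 = _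
  rw [hfollow_fst]
  rfl

lemma isPlay_hplay (hval : ∀ i, G.ValidStrategy i (σ i)) :
    G.IsPlay (G.hplay σ v) := by
  intro n
  rw [hplay_succ]
  exact hval _ _ _ rfl

lemma consistent_hplay (i : Bool) : G.Consistent i (σ i) (G.hplay σ v) := by
  intro n hn
  rw [hplay_succ, hn]

lemma not_both_winningFrom' {σt σf : Strategy V}
    (hvt : G.ValidStrategy true σt) (hvf : G.ValidStrategy false σf)
    (hwt : G.WinningFrom true σt v) (hwf : G.WinningFrom false σf v) : False := by
  set σ : Bool → Strategy V := fun i => if i then σt else σf with hσ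
  have hval : ∀ i, G.ValidStrategy i (σ i) := by
    intro i; cases i <;> simpa [hσ]
  have hp := G.isPlay_hplay (σ := σ) (v := v) hval
  have h1 : G.WinsPlay true (G.hplay σ v) :=
    hwt _ hp (by simpa [hσ] using G.consistent_hplay (σ := σ) (v := v) true) rfl
  have h2 : G.WinsPlay false (G.hplay σ v) :=
    hwf _ hp (by simpa [hσ] using G.consistent_hplay (σ := σ) (v := v) false) rfl
  exact G.winsPlay_not_both (i := true) h1 (by simpa using h2)

lemma not_both_winningFrom'' {i : Bool} {σ₁ σ₂ : Strategy V}
    (hv₁ : G.ValidStrategy i σ₁) (hv₂ : G.ValidStrategy (!i) σ₂)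
    (hw₁ : G.WinningFrom i σ₁ v) (hw₂ : G.WinningFrom (!i) σ₂ v) : False := by
  cases i
  · exact G.not_both_winningFrom' (by simpa using hv₂) hv₁ (by simpa using hw₂) hw₁
  · exact G.not_both_winningFrom' hv₁ (by simpa using hv₂) hw₁ (by simpa using hw₂)

end HFollow

section Main
open Classical

lemma bool_eq_not_of_ne {b c : Bool} (h : b ≠ c) : b = !c := by
  cases b <;> cases c <;> simp_all

lemma bool_not_eq_of_ne {b c : Bool} (h : b ≠ !c) : b = c := by
  cases b <;> cases c <;> simp_all

theorem exists_uniform_partition :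
    ∀ (n : ℕ) (V : Type u) [Fintype V] (G : ParityGame V), Fintype.card V ≤ n →
    ∃ (W : Bool → Set V) (σ : Bool → Strategy V),
      (∀ v, v ∈ W true ∨ v ∈ W false) ∧
      ∀ i, G.ValidStrategy i (σ i) ∧ Memoryless (σ i) ∧
        ∀ v ∈ W i, G.WinningFrom i (σ i) v := by
  intro n
  induction n with
  | zero =>
    intro V _ G hcard
    have hempty : IsEmpty V := Fintype.card_eq_zero_iff.mp (by omega)
    exact ⟨fun _ => ∅, fun _ _ v => G.anySucc v, fun v => isEmptyElim v,
      fun i => ⟨fun h v _ => G.anySucc_edge v, fun _ _ _ => rfl,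
        fun v => isEmptyElim v⟩⟩
  | succ n IH =>
    intro V _ G hcard
    rcases isEmpty_or_nonempty V with hempty | hne
    · exact ⟨fun _ => ∅, fun _ _ v => G.anySucc v, fun v => isEmptyElim v,
        fun i => ⟨fun h v _ => G.anySucc_edge v, fun _ _ _ => rfl,
          fun v => isEmptyElim v⟩⟩
    set d : ℕ := sInf (Set.range G.prio) with hd
    obtain ⟨v0, hv0⟩ : ∃ v0, G.prio v0 = d := Nat.sInf_mem (Set.range_nonempty G.prio)
    have hmin : ∀ v, d ≤ G.prio v := fun v => Nat.sInf_le ⟨v, rfl⟩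
    set j : Bool := decide (Even d) with hjdef
    have hj : Even d ↔ j = true := by rw [hjdef]; simp
    set T : Set V := {v | G.prio v = d} with hT
    set A : Set V := G.attr j T with hA
    set V₁ : Set V := Aᶜ with hV₁
    have htot₁ := G.compl_attr_total j T
    set G₁ : ParityGame ↥V₁ := G.subgame V₁ htot₁ with hG₁
    haveI : Fintype ↥V₁ := Fintype.ofFinite _
    have hv0A : v0 ∈ A := G.subset_attr j T hv0
    have hcard₁ : Fintype.card ↥V₁ ≤ n := by
      have hlt : Fintype.card ↥V₁ < Fintype.card V := by
        apply Fintype.card_lt_of_injective_of_notMem _ Subtype.val_injective (b := v0)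
        rw [Subtype.range_val]
        exact fun h => h hv0A
      omega
    obtain ⟨W₁, σ₁, hcov₁, hprop₁⟩ := IH ↥V₁ G₁ hcard₁
    have hval₁ : ∀ i, G₁.ValidStrategy i (σ₁ i) := fun i => (hprop₁ i).1
    have hmem₁ : ∀ i, Memoryless (σ₁ i) := fun i => (hprop₁ i).2.1
    have hwin₁ : ∀ i, ∀ w ∈ W₁ i, G₁.WinningFrom i (σ₁ i) w := fun i => (hprop₁ i).2.2
    have hcov₁' : ∀ (b : Bool) (w : ↥V₁), w ∈ W₁ b ∨ w ∈ W₁ (!b) := by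
      intro b w
      cases b
      · exact (hcov₁ w).symm
      · exact hcov₁ w
    -- the attractor `A` is closed for moves of player `j` from outside
    have hnoesc₁ : ∀ v : V, v ∈ V₁ → G.owner v = j → ∀ w, G.edge v w → w ∈ V₁ := by
      intro v hv ho w he hwA
      exact hv (G.attr_closed_own j T ho he hwA)
    by_cases hW : ∀ w : ↥V₁, w ∈ W₁ j
    · -- Case A : player j wins everywhere
      set τ : Strategy V := fun _ v =>
        if hv : v ∈ V₁ then (σ₁ j [] ⟨v, hv⟩ : V)
        else if G.owner v = j ∧ v ∉ T then G.attNext j T v else G.anySucc v with hτ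
      have hτval : G.ValidStrategy j τ := by
        intro h v ho
        rw [hτ]
        dsimp only
        split
        · next hv => exact hval₁ j [] ⟨v, hv⟩ ho
        · split
          · exact G.attNext_edge j T v
          · exact G.anySucc_edge v
      have hτmem : Memoryless τ := fun _ _ _ => rfl
      have hagreeA : ∀ (h : List V) v, v ∈ G.attr j T → v ∉ T → G.owner v = j →
          τ h v = G.attNext j T v := by
        intro h v hvA hvT ho
        rw [hτ]
        dsimp only
        rw [dif_neg (by simpa [hV₁] using hvA), if_pos ⟨ho, hvT⟩]
      have hagree₁ : ∀ (h : List V) (v : V) (hv : v ∈ V₁), G.owner v = j →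
          τ h v = (σ₁ j [] ⟨v, hv⟩ : V) := by
        intro h v hv ho
        rw [hτ]
        dsimp only
        rw [dif_pos hv]
      have hτwin : ∀ v, G.WinningFrom j τ v := by
        intro v p hp hc h0
        by_cases hstay : ∃ m, ∀ k, p (m + k) ∈ V₁
        · obtain ⟨m, hm⟩ := hstay
          apply G.winsPlay_shift m
          exact G.subgame_winning_transfer (hU := htot₁) (hmem₁ j)
            (G.isPlay_shift hp m) (G.consistent_shift hτmem hc m) hm
            (fun k ho => hagree₁ (hist (fun k => p (m + k)) k) (p (m + k)) (hm k) ho)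
            (w := ⟨p (m + 0), hm 0⟩) (hwin₁ j _ (hW _)) rfl
        · push_neg at hstay
          have hinf : G.InfOften p d := by
            intro N
            obtain ⟨k, hk⟩ := hstay N
            have hkA : p (N + k) ∈ G.attr j T := by
              rw [hV₁] at hk; simpa using hk
            obtain ⟨nn, hle, hnT, _⟩ := G.attr_forces j T τ hagreeA hp hc (N + k) hkA
            exact ⟨nn, by omega, hnT⟩
          have hne' : {k | G.InfOften p k}.Nonempty := ⟨d, hinf⟩
          have hsinf : sInf {k | G.InfOften p k} = d := by
            apply le_antisymm (Nat.sInf_le hinf)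
            obtain ⟨nn, _, hnn⟩ := Nat.sInf_mem hne' 0
            exact le_of_le_of_eq (hmin (p nn)) hnn
          show Even (sInf {k | G.InfOften p k}) ↔ j = true
          rw [hsinf]
          exact hj
      refine ⟨fun i => if i = j then Set.univ else ∅,
        fun i => if i = j then τ else fun _ v => G.anySucc v, ?_, ?_⟩
      · intro v
        rcases Bool.eq_false_or_eq_true j with hj' | hj' <;> rw [hj'] <;> simp
      · intro i
        by_cases hij : i = j
        · rw [hij]
          simp only [if_pos rfl]
          exact ⟨hτval, hτmem, fun v _ => hτwin v⟩
        · simp only [if_neg hij]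
          exact ⟨fun h v _ => G.anySucc_edge v, fun _ _ _ => rfl,
            fun v hv => absurd hv (Set.notMem_empty v)⟩
    · -- Case B
      push_neg at hW
      obtain ⟨w1, hw1⟩ := hW
      have hw1' : w1 ∈ W₁ (!j) := (hcov₁' j w1).resolve_left hw1
      set S : Set V := {v | ∃ hv : v ∈ V₁, (⟨v, hv⟩ : ↥V₁) ∈ W₁ (!j)} with hS
      have hSV₁ : S ⊆ V₁ := fun v hv => hv.choose
      set B : Set V := G.attr (!j) S with hB
      have hSB : S ⊆ B := G.subset_attr (!j) S
      set V₂ : Set V := Bᶜ with hV₂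
      have htot₂ := G.compl_attr_total (!j) S
      set G₂ : ParityGame ↥V₂ := G.subgame V₂ htot₂ with hG₂
      haveI : Fintype ↥V₂ := Fintype.ofFinite _
      have hw1S : (w1 : V) ∈ S := ⟨w1.2, by simpa using hw1'⟩
      have hcard₂ : Fintype.card ↥V₂ ≤ n := by
        have hlt : Fintype.card ↥V₂ < Fintype.card V := by
          apply Fintype.card_lt_of_injective_of_notMem _ Subtype.val_injective
            (b := (w1 : V))
          rw [Subtype.range_val]
          exact fun h => h (hSB hw1S)
        omega
      obtain ⟨W₂, σ₂, hcov₂, hprop₂⟩ := IH ↥V₂ G₂ hcard₂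
      have hval₂ : ∀ i, G₂.ValidStrategy i (σ₂ i) := fun i => (hprop₂ i).1
      have hmem₂ : ∀ i, Memoryless (σ₂ i) := fun i => (hprop₂ i).2.1
      have hwin₂ : ∀ i, ∀ w ∈ W₂ i, G₂.WinningFrom i (σ₂ i) w := fun i => (hprop₂ i).2.2
      -- strategies
      set τj : Strategy V := fun _ v =>
        if hv : v ∈ V₂ then (σ₂ j [] ⟨v, hv⟩ : V) else G.anySucc v with hτj
      set τo : Strategy V := fun _ v =>
        if v ∈ B ∧ v ∉ S ∧ G.owner v = !j then G.attNext (!j) S v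
        else if hv : v ∈ V₂ then (σ₂ (!j) [] ⟨v, hv⟩ : V)
        else if hv' : v ∈ V₁ then (σ₁ (!j) [] ⟨v, hv'⟩ : V)
        else G.anySucc v with hτo
      have hτjmem : Memoryless τj := fun _ _ _ => rfl
      have hτomem : Memoryless τo := fun _ _ _ => rfl
      have hτjval : G.ValidStrategy j τj := by
        intro h v ho
        rw [hτj]; dsimp only
        split
        · next hv => exact hval₂ j [] ⟨v, hv⟩ ho
        · exact G.anySucc_edge v
      have hτoval : G.ValidStrategy (!j) τo := by
        intro h v ho
        rw [hτo]; dsimp only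
        split
        · exact G.attNext_edge (!j) S v
        · split
          · next hv => exact hval₂ (!j) [] ⟨v, hv⟩ ho
          · split
            · next hv => exact hval₁ (!j) [] ⟨v, hv⟩ ho
            · exact G.anySucc_edge v
      -- winning for player j from the image of W₂ j
      have hwinj : ∀ v (hv₂ : v ∈ V₂), (⟨v, hv₂⟩ : ↥V₂) ∈ W₂ j →
          G.WinningFrom j τj v := by
        intro v hv₂ hvW p hp hc h0
        have hstay : ∀ k, p k ∈ V₂ := by
          intro k
          induction k with
          | zero => rw [h0]; exact hv₂
          | succ k ihk =>
            by_cases ho : G.owner (p k) = j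
            · rw [hc k ho, hτj]
              dsimp only
              rw [dif_pos ihk]
              exact (σ₂ j [] ⟨p k, ihk⟩).2
            · have ho' : G.owner (p k) = !j := bool_eq_not_of_ne ho
              intro hBmem
              exact ihk (G.attr_closed_own (!j) S ho' (hp k) hBmem)
        refine G.subgame_winning_transfer (hU := htot₂) (hmem₂ j) hp hc hstay ?_
          (w := ⟨v, hv₂⟩) (hwin₂ j _ hvW) h0
        intro k ho
        rw [hτj]; dsimp only
        rw [dif_pos (hstay k)]
      -- L1 : consistent plays that visit S are won by !j
      have hL1 : ∀ p, G.IsPlay p → G.Consistent (!j) τo p → ∀ m, p m ∈ S →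
          G.WinsPlay (!j) p := by
        intro p hp hc m hmS
        set q : ℕ → V := fun k => p (m + k) with hq
        have hqp : G.IsPlay q := G.isPlay_shift hp m
        have hqc : G.Consistent (!j) τo q := G.consistent_shift hτomem hc m
        have hq0 : q 0 ∈ S := by show p (m + 0) ∈ S; simpa using hmS
        have hqS : ∀ k, q k ∈ S := by
          by_contra hex
          push_neg at hex
          have hexists : ∃ k, q k ∉ S := hex
          set nn := Nat.find hexists with hnn
          have hnnS : q nn ∉ S := Nat.find_spec hexists
          have hlt : ∀ k, k < nn → q k ∈ S := fun k hk =>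
            not_not.mp (Nat.find_min hexists hk)
          have hnn0 : nn ≠ 0 := by
            intro h
            rw [h] at hnnS
            exact hnnS hq0
          have hprevS : q (nn - 1) ∈ S := hlt _ (by omega)
          obtain ⟨hprevV₁, hprevW⟩ := hprevS
          have hnn1 : nn - 1 + 1 = nn := by omega
          have hstep : q nn ∈ V₁ := by
            by_cases ho : G.owner (q (nn - 1)) = !j
            · have hcons := hqc (nn - 1) ho
              rw [hnn1] at hcons
              rw [hcons, hτo]
              dsimp only
              rw [if_neg (fun hcon => hcon.2.1 (hlt _ (by omega))),
                dif_neg (fun hcon => hcon (hSB (hlt _ (by omega)))),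
                dif_pos hprevV₁]
              exact (σ₁ (!j) [] ⟨q (nn - 1), hprevV₁⟩).2
            · have ho' : G.owner (q (nn - 1)) = j := bool_not_eq_of_ne ho
              have hedge : G.edge (q (nn - 1)) (q nn) := by
                have := hqp (nn - 1)
                rwa [hnn1] at this
              exact hnoesc₁ _ hprevV₁ ho' _ hedge
          have hmemq : ∀ k, q (min k nn) ∈ V₁ := by
            intro k
            rcases lt_or_ge k nn with hk | hk
            · rw [min_eq_left (le_of_lt hk)]
              exact hSV₁ (hlt k hk)
            · rw [min_eq_right hk]
              exact hstep
          set q' : ℕ → ↥V₁ := fun k => ⟨q (min k nn), hmemq k⟩ with hq'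
          set r := G₁.splice q' nn σ₁ with hr
          have hq'edge : ∀ k, k + 1 ≤ nn → G₁.edge (q' k) (q' (k + 1)) := by
            intro k hk
            show G.edge (q (min k nn)) (q (min (k + 1) nn))
            rw [min_eq_left (by omega), min_eq_left hk]
            exact hqp k
          have hq'cons : ∀ k, k + 1 ≤ nn → G₁.owner (q' k) = !j →
              q' (k + 1) = σ₁ (!j) (hist q' k) (q' k) := by
            intro k hk ho
            have hkS : q k ∈ S := hlt k (by omega)
            obtain ⟨hkV₁, _⟩ := hkS
            have ho' : G.owner (q (min k nn)) = !j := ho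
            rw [min_eq_left (by omega)] at ho'
            have hcons := hqc k ho'
            apply Subtype.ext
            show q (min (k + 1) nn) = (σ₁ (!j) (hist q' k) (q' k) : V)
            rw [min_eq_left hk, hcons, hτo]
            dsimp only
            rw [if_neg (fun hcon => hcon.2.1 (hlt k (by omega))),
              dif_neg (fun hcon => hcon (hSB (hlt k (by omega)))),
              dif_pos hkV₁]
            have hqeq : (⟨q k, hkV₁⟩ : ↥V₁) = q' k :=
              Subtype.ext (by rw [hq']; dsimp only; rw [min_eq_left (by omega)])
            rw [hqeq, hmem₁ (!j) [] (hist q' k) (q' k)]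
          have hrp : G₁.IsPlay r := G₁.isPlay_splice nn hq'edge hval₁
          have hrc : G₁.Consistent (!j) (σ₁ (!j)) r :=
            G₁.consistent_splice nn (hmem₁ (!j)) hq'cons
          have hr0 : r 0 ∈ W₁ (!j) := by
            have h1 : r 0 = q' 0 := G₁.splice_eq_left (Nat.zero_le nn)
            obtain ⟨h0V₁, h0W⟩ := hq0
            have h2 : q' 0 = ⟨q 0, h0V₁⟩ := Subtype.ext (by
              show q (min 0 nn) = q 0
              rw [Nat.min_comm, Nat.min_zero])
            rw [h1, h2]
            exact h0W
          have hstayr := G₁.stay_in_region W₁ σ₁ hcov₁ hval₁ hmem₁ hwin₁ hrp hrc hr0 nn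
          have hrnn : r nn = q' nn := G₁.splice_eq_left le_rfl
          rw [hrnn] at hstayr
          apply hnnS
          refine ⟨hstep, ?_⟩
          have h3 : (⟨q nn, hstep⟩ : ↥V₁) = q' nn := Subtype.ext (by
            show q nn = q (min nn nn)
            rw [min_self])
          rw [h3]
          exact hstayr
        apply G.winsPlay_shift m
        obtain ⟨h0V₁, h0W⟩ := hq0
        refine G.subgame_winning_transfer (hU := htot₁) (hmem₁ (!j)) hqp hqc
          (fun k => hSV₁ (hqS k)) ?_ (w := ⟨q 0, h0V₁⟩) (hwin₁ (!j) _ h0W) rfl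
        intro k ho
        have huS : q k ∈ S := hqS k
        rw [hτo]; dsimp only
        rw [if_neg (fun hcon => hcon.2.1 huS), dif_neg (fun hcon => hcon (hSB huS)),
          dif_pos (hSV₁ huS)]
      -- L2 : consistent plays that visit B are won by !j
      have hL2 : ∀ p, G.IsPlay p → G.Consistent (!j) τo p → ∀ m, p m ∈ B →
          G.WinsPlay (!j) p := by
        intro p hp hc m hmB
        have hagreeB : ∀ (h : List V) v, v ∈ G.attr (!j) S → v ∉ S → G.owner v = !j →
            τo h v = G.attNext (!j) S v := by
          intro h v hvB hvS ho
          rw [hτo]; dsimp only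
          rw [if_pos ⟨hvB, hvS, ho⟩]
        obtain ⟨nn, _, hnS, _⟩ := G.attr_forces (!j) S τo hagreeB hp hc m hmB
        exact hL1 p hp hc nn hnS
      have hcov₂' : ∀ (b : Bool) (w : ↥V₂), w ∈ W₂ b ∨ w ∈ W₂ (!b) := by
        intro b w
        cases b
        · exact (hcov₂ w).symm
        · exact hcov₂ w
      set Xj : Set V := {u | ∃ hu : u ∈ V₂, (⟨u, hu⟩ : ↥V₂) ∈ W₂ j} with hXj
      set Xo : Set V := B ∪ {u | ∃ hu : u ∈ V₂, (⟨u, hu⟩ : ↥V₂) ∈ W₂ (!j)} with hXo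
      have hwino : ∀ v ∈ Xo, G.WinningFrom (!j) τo v := by
        intro v hv p hp hc h0
        rcases hv with hvB | ⟨hv₂, hvW⟩
        · exact hL2 p hp hc 0 (by rw [h0]; exact hvB)
        · by_cases hin : ∀ k, p k ∈ V₂
          · refine G.subgame_winning_transfer (hU := htot₂) (hmem₂ (!j)) hp hc hin ?_
              (w := ⟨v, hv₂⟩) (hwin₂ (!j) _ hvW) h0
            intro k ho
            rw [hτo]; dsimp only
            rw [if_neg (fun hcon => (hin k) hcon.1), dif_pos (hin k)]
          · push_neg at hin
            obtain ⟨k, hk⟩ := hin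
            exact hL2 p hp hc k (not_not.mp hk)
      refine ⟨fun i => if i = j then Xj else Xo, fun i => if i = j then τj else τo,
        ?_, ?_⟩
      · intro v
        have hv2mem : v ∈ Xj ∨ v ∈ Xo := by
          by_cases hvB : v ∈ B
          · exact Or.inr (Or.inl hvB)
          · rcases hcov₂' j ⟨v, hvB⟩ with h | h
            · exact Or.inl ⟨hvB, h⟩
            · exact Or.inr (Or.inr ⟨hvB, h⟩)
        dsimp only
        rcases Bool.eq_false_or_eq_true j with hj' | hj' <;> rw [hj'] <;>
          simp only [reduceIte] <;> tauto
      · intro i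
        by_cases hij : i = j
        · rw [hij]
          simp only [if_pos rfl]
          exact ⟨hτjval, hτjmem, fun v hv => hwinj v hv.choose hv.choose_spec⟩
        · have hij' : i = !j := bool_eq_not_of_ne hij
          have hne2 : ¬((!j) = j) := by cases j <;> simp
          rw [hij']
          simp only [if_neg hne2]
          exact ⟨hτoval, hτomem, hwino⟩

end Main
end ParityGame

/-- **Memoryless determinacy.** Every parity game has a unique partition
`(W_even, W_odd)` of its vertices such that player even has a winning strategy
from every vertex of `W_even` and player odd from every vertex of `W_odd`;
moreover any player with a winning strategy from a vertex also has a
memoryless winning strategy from it. -/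
theorem memoryless_determinacy {V : Type u} [Fintype V] (G : ParityGame V) :
    (∃! W : Set V × Set V,
        W.1 ∪ W.2 = Set.univ ∧ W.1 ∩ W.2 = ∅ ∧
        (∀ v ∈ W.1, ∃ σ : ParityGame.Strategy V,
          G.ValidStrategy true σ ∧ G.WinningFrom true σ v) ∧
        (∀ v ∈ W.2, ∃ σ : ParityGame.Strategy V,
          G.ValidStrategy false σ ∧ G.WinningFrom false σ v)) ∧
    (∀ (i : Bool) (v : V),
        (∃ σ : ParityGame.Strategy V, G.ValidStrategy i σ ∧ G.WinningFrom i σ v) →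
        ∃ σ : ParityGame.Strategy V,
          G.ValidStrategy i σ ∧ ParityGame.Memoryless σ ∧ G.WinningFrom i σ v) := by
  classical
  obtain ⟨W, σ, hcov, hprop⟩ :=
    ParityGame.exists_uniform_partition (Fintype.card V) V G le_rfl
  have hval : ∀ i, G.ValidStrategy i (σ i) := fun i => (hprop i).1
  have hmem : ∀ i, ParityGame.Memoryless (σ i) := fun i => (hprop i).2.1
  have hwin : ∀ i, ∀ v ∈ W i, G.WinningFrom i (σ i) v := fun i => (hprop i).2.2
  have hdis : ∀ v, v ∈ W true → v ∈ W false → False := fun v h1 h2 =>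
    G.not_both_winningFrom' (hval true) (hval false) (hwin true v h1) (hwin false v h2)
  have hkey : ∀ (i : Bool) (v : V) (σ' : ParityGame.Strategy V),
      G.ValidStrategy i σ' → G.WinningFrom i σ' v → v ∈ W i := by
    intro i v σ' hv' hw'
    by_contra hvW
    have hvW' : v ∈ W (!i) := by
      rcases hcov v with h | h <;> cases i <;> simp_all
    exact G.not_both_winningFrom'' hv' (hval (!i)) hw' (hwin (!i) v hvW')
  constructor
  · refine ⟨(W true, W false), ⟨?_, ?_, ?_, ?_⟩, ?_⟩
    · ext v
      simp only [Set.mem_union, Set.mem_univ, iff_true]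
      exact hcov v
    · ext v
      simp only [Set.mem_inter_iff, Set.mem_empty_iff_false, iff_false]
      exact fun h => hdis v h.1 h.2
    · exact fun v hv => ⟨σ true, hval true, hwin true v hv⟩
    · exact fun v hv => ⟨σ false, hval false, hwin false v hv⟩
    · rintro ⟨W1, W2⟩ ⟨hu, hi, h1, h2⟩
      have hsub1 : W1 ⊆ W true := by
        intro v hv
        obtain ⟨σ', hσ'v, hσ'w⟩ := h1 v hv
        exact hkey true v σ' hσ'v hσ'w
      have hsub2 : W2 ⊆ W false := by
        intro v hv
        obtain ⟨σ', hσ'v, hσ'w⟩ := h2 v hv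
        exact hkey false v σ' hσ'v hσ'w
      have h1' : W true ⊆ W1 := by
        intro v hv
        have hvu : v ∈ W1 ∪ W2 := by rw [hu]; trivial
        rcases hvu with h | h
        · exact h
        · exact absurd (hdis v hv (hsub2 h)) not_false
      have h2' : W false ⊆ W2 := by
        intro v hv
        have hvu : v ∈ W1 ∪ W2 := by rw [hu]; trivial
        rcases hvu with h | h
        · exact absurd (hdis v (hsub1 h) hv) not_false
        · exact h
      have e1 : W1 = W true := subset_antisymm hsub1 h1'
      have e2 : W2 = W false := subset_antisymm hsub2 h2'
      simp [Prod.ext_iff, e1, e2]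
  · rintro i v ⟨σ', hσ'v, hσ'w⟩
    exact ⟨σ i, hval i, hmem i, hwin i v (hkey i v σ' hσ'v hσ'w)⟩
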